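/- Let S have (p,δ)-structure with characteristics (κ₀, κ₁, p) for some p ∈ (1,∞) and δ ≥ 0. For symmetric A, B ∈ ℝ^{3×3}_sym with A ≠ 0 (or δ > 0) define 𝒫(A, B) := Σ_{k,l,m,n=1}^{3} ∂_{kl}S_{mn}(A) B_{kl} B_{mn}. Then there exist constants c, C > 0 depending only on the characteristics (κ₀, κ₁, p) of S such that c·|DS(A)[B]|²/φ''(|A|) ≤ 𝒫(A, B) ≤ C·|DS(A)[B]|²/φ''(|A|), where φ = φ_{p,δ} and DS(A)[B] is the directional derivative of S at A in direction B. In particular, for a smooth symmetric tensor field Q this yields 𝒫_i(Q) := ∂_i S(Q)·∂_i Q ~ |∂_i S(Q)|²/φ''(|Q|) for i = 1,2,3. -/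

import Mathlib

noncomputable section

open Matrix

attribute [local instance] Matrix.normedAddCommGroup Matrix.normedSpace

/-- 3×3 real matrices. -/
abbrev Mat3 := Matrix (Fin 3) (Fin 3) ℝ

/-- The symmetric part `P^sym = (P + Pᵀ)/2` of a matrix. -/
def msym (P : Mat3) : Mat3 := (1 / 2 : ℝ) • (P + Pᵀ)

/-- The scalar product of tensors `A·B = Σ_{i,j} A_{ij} B_{ij}`. -/
def mdot (A B : Mat3) : ℝ := ∑ i, ∑ j, A i j * B i j

/-- The Euclidean (Frobenius) norm `|A| = √(A·A)`. -/
def mnorm (A : Mat3) : ℝ := Real.sqrt (mdot A A)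

/-- The N-function `φ_{p,δ}(t) = ∫₀ᵗ (δ+s)^{p-2} s ds`. -/
def phi (p δ t : ℝ) : ℝ := ∫ s in (0:ℝ)..t, (δ + s) ^ (p - 2) * s

/-- Its first derivative `φ'(t) = (δ+t)^{p-2} t`. -/
def phi' (p δ t : ℝ) : ℝ := (δ + t) ^ (p - 2) * t

/-- Its second derivative `φ''(t) = (p-2)(δ+t)^{p-3} t + (δ+t)^{p-2}` (for `t > 0`). -/
def phi'' (p δ t : ℝ) : ℝ := (p - 2) * (δ + t) ^ (p - 3) * t + (δ + t) ^ (p - 2)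

/-- The partial derivative `∂_{kl} S_{ij}(P)` of the `(i,j)` component of `S`
with respect to the `(k,l)` matrix entry. -/
def DS (S : Mat3 → Mat3) (P : Mat3) (k l i j : Fin 3) : ℝ :=
  fderiv ℝ S P (Matrix.single k l 1) i j

/-- A tensor field `S` has `(p,δ)`-structure with characteristics `(κ₀, κ₁, p)`. -/
structure PDelta (p δ κ₀ κ₁ : ℝ) (S : Mat3 → Mat3) : Prop where
  cont : Continuous S
  smooth : ContDiffOn ℝ 1 S {(0 : Mat3)}ᶜ
  symval : ∀ P, (S P)ᵀ = S P
  symdep : ∀ P, S P = S (msym P)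
  zero : S 0 = 0
  lower : ∀ P Q : Mat3, msym P ≠ 0 →
    κ₀ * phi'' p δ (mnorm (msym P)) * (mnorm (msym Q)) ^ 2 ≤
      ∑ i, ∑ j, ∑ k, ∑ l, DS S P k l i j * Q i j * Q k l
  upper : ∀ P : Mat3, msym P ≠ 0 → ∀ i j k l : Fin 3,
    |DS S P k l i j| ≤ κ₁ * phi'' p δ (mnorm (msym P))

/-- The tensor field `F(P) = (δ + |P^sym|)^{(p-2)/2} P^sym` associated to `S`. -/
def Fassoc (p δ : ℝ) (P : Mat3) : Mat3 :=
  (δ + mnorm (msym P)) ^ ((p - 2) / 2) • msym P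

/-- `𝒫(A,B) = Σ_{k,l,m,n} ∂_{kl}S_{mn}(A) B_{kl} B_{mn}`. -/
def Pquad (S : Mat3 → Mat3) (A B : Mat3) : ℝ :=
  ∑ k, ∑ l, ∑ m, ∑ n, DS S A k l m n * B k l * B m n

/-!
Expanding `B` in the standard basis, `𝒫(A, B) = DS(A)[B] · B`. Where `A ≠ 0` the structure
conditions give the coercivity `DS(A)[B] · B ≥ κ₀ φ''(|A|) |B|²` and, summing the entrywise
bounds, `|DS(A)[B]| ≤ 27 κ₁ φ''(|A|) |B|`; together with Cauchy–Schwarz these yield both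
inequalities with `c = κ₀ / (27 κ₁)²` and `C = 1 / κ₀`. At `A = 0` (so `δ > 0`) the structure
conditions say nothing, but if `S` is differentiable there both estimates pass to the limit along
the ray `t ↦ t B`: the mean value theorem bounds the difference quotients at `0` by derivatives at
`t B`, and `φ''` is continuous at `0`.
-/

open Filter Topology Set
open scoped RealInnerProductSpace

def frob : Mat3 ≃ₗ[ℝ] EuclideanSpace ℝ (Fin 3 × Fin 3) :=
  (LinearEquiv.curry ℝ ℝ (Fin 3) (Fin 3)).symm.trans (WithLp.linearEquiv 2 ℝ _).symm

lemma frob_apply (X : Mat3) (ij : Fin 3 × Fin 3) : frob X ij = X ij.1 ij.2 := rfl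

lemma mdot_eq_inner (X Y : Mat3) : mdot X Y = ⟪frob X, frob Y⟫ := by
  simp [mdot, PiLp.inner_apply, Fintype.sum_prod_type, frob_apply, mul_comm]

lemma mnorm_eq_norm (X : Mat3) : mnorm X = ‖frob X‖ := by
  rw [mnorm, mdot_eq_inner, real_inner_self_eq_norm_sq, Real.sqrt_sq (norm_nonneg _)]

lemma mnorm_nonneg (X : Mat3) : 0 ≤ mnorm X := Real.sqrt_nonneg _

lemma mnorm_pos {X : Mat3} (hX : X ≠ 0) : 0 < mnorm X := by
  rw [mnorm_eq_norm, norm_pos_iff]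
  exact frob.map_ne_zero_iff.2 hX

lemma mnorm_smul (t : ℝ) (X : Mat3) : mnorm (t • X) = |t| * mnorm X := by
  rw [mnorm_eq_norm, mnorm_eq_norm, map_smul, norm_smul, Real.norm_eq_abs]

lemma mdot_le_mnorm_mul (X Y : Mat3) : mdot X Y ≤ mnorm X * mnorm Y := by
  rw [mdot_eq_inner, mnorm_eq_norm, mnorm_eq_norm]
  exact real_inner_le_norm _ _

lemma neg_mnorm_mul_le_mdot (X Y : Mat3) : -(mnorm X * mnorm Y) ≤ mdot X Y := by
  rw [mdot_eq_inner, mnorm_eq_norm, mnorm_eq_norm]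
  exact neg_le_of_abs_le (abs_real_inner_le_norm _ _)

lemma mnorm_neg (X : Mat3) : mnorm (-X) = mnorm X := by
  rw [mnorm_eq_norm, mnorm_eq_norm, map_neg, norm_neg]

lemma mdot_neg_self (X : Mat3) : mdot X (-X) = -mnorm X ^ 2 := by
  rw [mdot_eq_inner, mnorm_eq_norm, map_neg, inner_neg_right, real_inner_self_eq_norm_sq]

lemma abs_apply_le_mnorm (X : Mat3) (i j : Fin 3) : |X i j| ≤ mnorm X := by
  simpa [mnorm_eq_norm, frob_apply] using PiLp.norm_apply_le (frob X) (i, j)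

lemma mnorm_le_of_abs_apply_le {X : Mat3} {M : ℝ} (h : ∀ i j, |X i j| ≤ M) :
    mnorm X ≤ 3 * M := by
  have hM : 0 ≤ M := (abs_nonneg _).trans (h 0 0)
  rw [mnorm_eq_norm, EuclideanSpace.norm_eq, Real.sqrt_le_left (by positivity)]
  calc ∑ ij, ‖frob X ij‖ ^ 2 ≤ ∑ _ij : Fin 3 × Fin 3, M ^ 2 :=
        Finset.sum_le_sum fun ij _ => pow_le_pow_left₀ (norm_nonneg _) (h ij.1 ij.2) 2
    _ = (3 * M) ^ 2 := by simp; ring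

lemma msym_eq_self {X : Mat3} (hX : Xᵀ = X) : msym X = X := by
  rw [msym, hX, ← two_smul ℝ X, smul_smul]; norm_num

lemma linearMap_apply_eq_sum_single {m n R M : Type*} [Fintype m] [Fintype n] [DecidableEq m]
    [DecidableEq n] [CommSemiring R] [AddCommMonoid M] [Module R M]
    (f : Matrix m n R →ₗ[R] M) (Q : Matrix m n R) :
    f Q = ∑ k, ∑ l, Q k l • f (Matrix.single k l 1) := by
  conv_lhs => rw [matrix_eq_sum_single Q]
  simp only [map_sum, ← map_smul, smul_single, smul_eq_mul, mul_one]

lemma fderiv_apply_eq_sum_DS (S : Mat3 → Mat3) (P Q : Mat3) (i j : Fin 3) :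
    fderiv ℝ S P Q i j = ∑ k, ∑ l, Q k l * DS S P k l i j := by
  have h := linearMap_apply_eq_sum_single (fderiv ℝ S P).toLinearMap Q
  simp only [ContinuousLinearMap.coe_coe] at h
  simp [h, DS, Matrix.sum_apply]

lemma sum_DS_mul_eq_mdot (S : Mat3 → Mat3) (P Q : Mat3) :
    ∑ i, ∑ j, ∑ k, ∑ l, DS S P k l i j * Q i j * Q k l = mdot (fderiv ℝ S P Q) Q := by
  simp only [mdot, fderiv_apply_eq_sum_DS, Finset.sum_mul]
  exact Finset.sum_congr rfl fun _ _ => Finset.sum_congr rfl fun _ _ =>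
    Finset.sum_congr rfl fun _ _ => Finset.sum_congr rfl fun _ _ => by ring

lemma Pquad_eq_mdot (S : Mat3 → Mat3) (A B : Mat3) :
    Pquad S A B = mdot (fderiv ℝ S A B) B := by
  rw [← sum_DS_mul_eq_mdot, Pquad]
  simp only [Fin.sum_univ_three]
  ring

lemma HasDerivAt.le_of_eventually_le_deriv {g g' : ℝ → ℝ} {d m x : ℝ} (hd : HasDerivAt g d x)
    (hg : ∀ᶠ t in 𝓝[>] x, HasDerivAt g (g' t) t) (hm : ∀ᶠ t in 𝓝[>] x, m ≤ g' t) :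
    m ≤ d := by
  obtain ⟨ε, hxε, hε⟩ := mem_nhdsGT_iff_exists_Ioo_subset.1 (hg.and hm)
  have hslope : Tendsto (slope g x) (𝓝[>] x) (𝓝 d) :=
    hd.tendsto_slope.mono_left (nhdsWithin_mono x fun t ht => ne_of_gt ht)
  refine ge_of_tendsto hslope ?_
  filter_upwards [Ioo_mem_nhdsGT hxε] with t ht
  have hcont : ContinuousOn g (Icc x t) := fun y hy => by
    rcases hy.1.eq_or_lt with rfl | hxy
    · exact hd.continuousAt.continuousWithinAt
    · exact (hε ⟨hxy, hy.2.trans_lt ht.2⟩).1.continuousAt.continuousWithinAt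
  obtain ⟨c, hc, hgc⟩ := exists_hasDerivAt_eq_slope g g' ht.1 hcont
    fun y hy => (hε ⟨hy.1, hy.2.trans ht.2⟩).1
  rw [slope_def_field, ← hgc]
  exact (hε ⟨hc.1, hc.2.trans ht.2⟩).2

lemma HasDerivAt.le_of_tendsto_le_deriv {g g' m : ℝ → ℝ} {d m₀ x : ℝ} (hd : HasDerivAt g d x)
    (hg : ∀ᶠ t in 𝓝[>] x, HasDerivAt g (g' t) t) (hm : Tendsto m (𝓝[>] x) (𝓝 m₀))
    (hle : ∀ᶠ t in 𝓝[>] x, m t ≤ g' t) : m₀ ≤ d :=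
  le_of_forall_lt_imp_le_of_dense fun _ hm₁ => hd.le_of_eventually_le_deriv hg <|
    ((hm.eventually (lt_mem_nhds hm₁)).and hle).mono fun _ ht => ht.1.le.trans ht.2

lemma hasDerivAt_mdot_comp_smul {S : Mat3 → Mat3} {B : Mat3} {t : ℝ}
    (hS : DifferentiableAt ℝ S (t • B)) (C : Mat3) :
    HasDerivAt (fun s : ℝ => mdot (S (s • B)) C) (mdot (fderiv ℝ S (t • B) B) C) t := by
  have hray : HasDerivAt (fun s : ℝ => S (s • B)) (fderiv ℝ S (t • B) B) t := by
    have hline := (hasDerivAt_id t).smul_const B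
    rw [one_smul] at hline
    exact hS.hasFDerivAt.comp_hasDerivAt t hline
  simp only [mdot_eq_inner]
  have := (frob.toContinuousLinearMap.hasFDerivAt.comp_hasDerivAt t hray).inner ℝ
    (hasDerivAt_const t (frob C))
  rw [inner_zero_right, zero_add] at this
  exact this

lemma le_mdot_fderiv_zero_of_tendsto {S : Mat3 → Mat3} (hS : DifferentiableOn ℝ S {0}ᶜ)
    (hS₀ : DifferentiableAt ℝ S 0) {B : Mat3} (hB : B ≠ 0) (C : Mat3) {m : ℝ → ℝ} {m₀ : ℝ}
    (hm : Tendsto m (𝓝[>] 0) (𝓝 m₀)) (hle : ∀ t > 0, m t ≤ mdot (fderiv ℝ S (t • B) B) C) :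
    m₀ ≤ mdot (fderiv ℝ S 0 B) C := by
  have hd := hasDerivAt_mdot_comp_smul (B := B) (t := 0) (by rwa [zero_smul]) C
  rw [zero_smul] at hd
  refine hd.le_of_tendsto_le_deriv ?_ hm (eventually_nhdsWithin_of_forall hle)
  refine eventually_nhdsWithin_of_forall fun t ht => hasDerivAt_mdot_comp_smul ?_ C
  exact hS.differentiableAt (isOpen_compl_singleton.mem_nhds (smul_ne_zero (ne_of_gt ht) hB))

lemma phi''_pos {p δ t : ℝ} (hp : 1 < p) (hδ : 0 ≤ δ) (ht : 0 ≤ t) (hδt : 0 < δ + t) :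
    0 < phi'' p δ t := by
  have hfactor : phi'' p δ t = (δ + t) ^ (p - 3) * ((p - 1) * t + δ) := by
    rw [phi'', show p - 2 = (p - 3) + 1 by ring, Real.rpow_add hδt, Real.rpow_one]
    ring
  have hlin : 0 < (p - 1) * t + δ := by
    rcases ht.eq_or_lt with rfl | ht'
    · linarith
    · nlinarith [mul_pos (sub_pos.2 hp) ht']
  rw [hfactor]
  exact mul_pos (Real.rpow_pos_of_pos hδt _) hlin

lemma continuousAt_phi'' {p δ t : ℝ} (hδt : δ + t ≠ 0) : ContinuousAt (phi'' p δ) t := by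
  unfold phi''
  fun_prop (disch := exact Or.inl hδt)

lemma comparable_sq_div {a P n b ψ K : ℝ} (ha : 0 < a) (hψ : 0 < ψ) (hK : 0 < K) (hn : 0 ≤ n)
    (hb : 0 ≤ b) (hcoer : a * ψ * b ^ 2 ≤ P) (hCS : P ≤ n * b) (hbdd : n ≤ K * ψ * b) :
    a / K ^ 2 * (n ^ 2 / ψ) ≤ P ∧ P ≤ 1 / a * (n ^ 2 / ψ) := by
  constructor
  · have hn2 : n ^ 2 ≤ (K * ψ * b) ^ 2 := pow_le_pow_left₀ hn hbdd 2
    calc a / K ^ 2 * (n ^ 2 / ψ) ≤ a / K ^ 2 * ((K * ψ * b) ^ 2 / ψ) := by gcongr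
      _ = a * ψ * b ^ 2 := by field_simp
      _ ≤ P := hcoer
  · have hab : a * ψ * b ≤ n := by
      rcases hb.eq_or_lt with rfl | hb'
      · simpa using hn
      · nlinarith
    calc P ≤ n * b := hCS
      _ ≤ n * (n / (a * ψ)) := by gcongr; rwa [le_div_iff₀ (by positivity), mul_comm]
      _ = 1 / a * (n ^ 2 / ψ) := by field_simp

namespace PDelta

variable {p δ κ₀ κ₁ : ℝ} {S : Mat3 → Mat3}

lemma coercive (hS : PDelta p δ κ₀ κ₁ S) {P : Mat3} (hP : msym P ≠ 0) (Q : Mat3) :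
    κ₀ * phi'' p δ (mnorm (msym P)) * mnorm (msym Q) ^ 2 ≤ mdot (fderiv ℝ S P Q) Q :=
  (hS.lower P Q hP).trans_eq (sum_DS_mul_eq_mdot S P Q)

lemma mnorm_fderiv_apply_le (hS : PDelta p δ κ₀ κ₁ S) {P : Mat3} (hP : msym P ≠ 0)
    (Q : Mat3) :
    mnorm (fderiv ℝ S P Q) ≤ 27 * κ₁ * phi'' p δ (mnorm (msym P)) * mnorm Q := by
  set K := κ₁ * phi'' p δ (mnorm (msym P))
  have hentry : ∀ i j, |fderiv ℝ S P Q i j| ≤ 9 * K * mnorm Q := fun i j => by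
    rw [fderiv_apply_eq_sum_DS]
    calc |∑ k, ∑ l, Q k l * DS S P k l i j| ≤ ∑ _k : Fin 3, ∑ _l : Fin 3, mnorm Q * K := by
          refine (Finset.abs_sum_le_sum_abs _ _).trans (Finset.sum_le_sum fun k _ => ?_)
          refine (Finset.abs_sum_le_sum_abs _ _).trans (Finset.sum_le_sum fun l _ => ?_)
          rw [abs_mul]
          exact mul_le_mul (abs_apply_le_mnorm Q k l) (hS.upper P hP i j k l) (abs_nonneg _)
            (mnorm_nonneg Q)
      _ = 9 * K * mnorm Q := by simp; ring
  exact (mnorm_le_of_abs_apply_le hentry).trans_eq (by ring)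

lemma fderiv_zero_bounds (hS : PDelta p δ κ₀ κ₁ S) (hκ₁ : 0 ≤ κ₁) (hδ : 0 < δ)
    (hS₀ : DifferentiableAt ℝ S 0) {B : Mat3} (hB : Bᵀ = B) :
    κ₀ * phi'' p δ 0 * mnorm B ^ 2 ≤ mdot (fderiv ℝ S 0 B) B ∧
      mnorm (fderiv ℝ S 0 B) ≤ 27 * κ₁ * phi'' p δ 0 * mnorm B := by
  rcases eq_or_ne B 0 with rfl | hB0
  · simp [mnorm, mdot]
  have hsym : ∀ t : ℝ, msym (t • B) = t • B := fun t =>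
    msym_eq_self (by rw [Matrix.transpose_smul, hB])
  have hne : ∀ t : ℝ, 0 < t → msym (t • B) ≠ 0 := fun t ht => by
    rw [hsym]; exact smul_ne_zero (ne_of_gt ht) hB0
  have hnorm : ∀ t : ℝ, 0 < t → mnorm (msym (t • B)) = t * mnorm B := fun t ht => by
    rw [hsym, mnorm_smul, abs_of_pos ht]
  have hφ : Tendsto (fun t => phi'' p δ (t * mnorm B)) (𝓝[>] 0) (𝓝 (phi'' p δ 0)) := by
    have hlin : Tendsto (fun t : ℝ => t * mnorm B) (𝓝 0) (𝓝 0) := by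
      simpa using (continuous_mul_const (mnorm B)).tendsto 0
    exact tendsto_nhdsWithin_of_tendsto_nhds
      ((continuousAt_phi'' (by simpa using hδ.ne')).tendsto.comp hlin)
  have hdiff : DifferentiableOn ℝ S {0}ᶜ := hS.smooth.differentiableOn one_ne_zero
  constructor
  · refine le_mdot_fderiv_zero_of_tendsto hdiff hS₀ hB0 B
      ((hφ.const_mul κ₀).mul_const (mnorm B ^ 2)) fun t ht => ?_
    simpa [hnorm t ht, msym_eq_self hB] using hS.coercive (hne t ht) B
  · set X := fderiv ℝ S 0 B
    have hbdd : ∀ t : ℝ, 0 < t →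
        mnorm (fderiv ℝ S (t • B) B) ≤ 27 * κ₁ * phi'' p δ (t * mnorm B) * mnorm B :=
      fun t ht => by simpa [hnorm t ht] using hS.mnorm_fderiv_apply_le (hne t ht) B
    have hX := le_mdot_fderiv_zero_of_tendsto hdiff hS₀ hB0 (-X)
      ((((hφ.const_mul (27 * κ₁)).mul_const (mnorm B)).mul_const (mnorm (-X))).neg)
      fun t ht => (neg_le_neg (mul_le_mul_of_nonneg_right (hbdd t ht) (mnorm_nonneg _))).trans
        (neg_mnorm_mul_le_mdot _ _)
    rw [mdot_neg_self, mnorm_neg] at hX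
    have hK : 0 ≤ 27 * κ₁ * phi'' p δ 0 * mnorm B := by
      have hφ₀ : phi'' p δ 0 = δ ^ (p - 2) := by simp [phi'']
      exact mul_nonneg (by rw [hφ₀]; positivity) (mnorm_nonneg B)
    nlinarith [mnorm_nonneg X]

lemma fderiv_bounds (hS : PDelta p δ κ₀ κ₁ S) (hκ₁ : 0 ≤ κ₁) {A B : Mat3} (hA : Aᵀ = A)
    (hB : Bᵀ = B) (hSA : DifferentiableAt ℝ S A) (hAδ : 0 < δ ∨ A ≠ 0) :
    κ₀ * phi'' p δ (mnorm A) * mnorm B ^ 2 ≤ mdot (fderiv ℝ S A B) B ∧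
      mnorm (fderiv ℝ S A B) ≤ 27 * κ₁ * phi'' p δ (mnorm A) * mnorm B := by
  rcases eq_or_ne A 0 with rfl | hA0
  · simpa [mnorm, mdot] using hS.fderiv_zero_bounds hκ₁ (hAδ.resolve_right (· rfl)) hSA hB
  have hP : msym A ≠ 0 := by rwa [msym_eq_self hA]
  have hcoer := hS.coercive hP B
  have hbdd := hS.mnorm_fderiv_apply_le hP B
  rw [msym_eq_self hA, msym_eq_self hB] at hcoer
  rw [msym_eq_self hA] at hbdd
  exact ⟨hcoer, hbdd⟩

end PDelta

/-- For `S` with `(p,δ)`-structure, and symmetric `A, B` with `δ > 0` or `A ≠ 0`: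
`𝒫(A,B) ∼ |DS(A)[B]|²/φ''(|A|)`, with constants depending only on the characteristics
`(κ₀, κ₁, p)` of `S`. Here `DS(A)[B] = (fderiv ℝ S A) B`. -/
theorem Pquad_equiv_DS (p κ₀ κ₁ : ℝ) (hp : 1 < p) (hκ₀ : 0 < κ₀) (hκ₁ : 0 < κ₁) :
    ∃ c C : ℝ, 0 < c ∧ 0 < C ∧ ∀ δ : ℝ, 0 ≤ δ → ∀ S : Mat3 → Mat3,
      PDelta p δ κ₀ κ₁ S →
      ∀ A B : Mat3, Aᵀ = A → Bᵀ = B → (0 < δ ∨ A ≠ 0) →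
        c * ((mnorm (fderiv ℝ S A B)) ^ 2 / phi'' p δ (mnorm A)) ≤ Pquad S A B ∧
        Pquad S A B ≤ C * ((mnorm (fderiv ℝ S A B)) ^ 2 / phi'' p δ (mnorm A)) := by
  refine ⟨κ₀ / (27 * κ₁) ^ 2, 1 / κ₀, by positivity, by positivity, ?_⟩
  intro δ hδ S hS A B hA hB hAδ
  rw [Pquad_eq_mdot]
  by_cases hSA : DifferentiableAt ℝ S A
  · have hψ : 0 < phi'' p δ (mnorm A) := by
      refine phi''_pos hp hδ (mnorm_nonneg A) ?_
      rcases hAδ with hδ' | hA0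
      · linarith [mnorm_nonneg A]
      · linarith [mnorm_pos hA0]
    obtain ⟨hcoer, hbdd⟩ := hS.fderiv_bounds hκ₁.le hA hB hSA hAδ
    exact comparable_sq_div hκ₀ hψ (by positivity) (mnorm_nonneg _) (mnorm_nonneg B) hcoer
      (mdot_le_mnorm_mul _ _) hbdd
  · -- `fderiv` is `0` where `S` is not differentiable, so both sides vanish.
    simp [fderiv_zero_of_not_differentiableAt hSA, mnorm, mdot]
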